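/- Let A be a nonempty closed and geodesically convex subset of the l∞ plane ℝ²_∞ and let p = (p₁,p₂) ∉ A be a point such that exactly the two sectors S₁^+(p) and S₂^+(p) intersect A (the sectors S₁^−(p) and S₂^−(p) do not meet A). Let t₀ be the supremum of the parameters t ≥ 0 for which the antidiagonal line through (p₁+t, p₂+t), namely I^{+−}(p₁+t,p₂+t) ∪ I^{−+}(p₁+t,p₂+t), does not intersect A, and set q = (p₁ + t₀, p₂ + t₀). Then d∞(a, q) ≤ d∞(a, p) for every a ∈ A. -/

import Mathlib

/-!
Every point of `A` lies strictly above the antidiagonal through `p` (otherwise it would lie in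
`S₁^-(p)` or `S₂^-(p)`), and `A` is connected, so the levels `b₁ + b₂` of points of `A` form an
interval above `p₁ + p₂`. The antidiagonal line of level `p₁ + p₂ + 2t` misses `A` iff that level
lies outside this interval; a missing line strictly above some `a ∈ A` and below another line
meeting `A` would contradict connectedness, so `p₁ + p₂ + 2t₀ ≤ a₁ + a₂` for all `a ∈ A`.
Moving `p` by `t₀ ≥ 0` along the diagonal brings it closer, in `d∞`, to every point of that
half-plane.
-/

/-- A geodesic from `p` to `q` in a metric space: an isometric embedding of the
real interval `[0, dist p q]` sending `0` to `p` and `dist p q` to `q`. -/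
def IsGeodesic {X : Type*} [MetricSpace X] (p q : X) (γ : ℝ → X) : Prop :=
  γ 0 = p ∧ γ (dist p q) = q ∧
    ∀ s ∈ Set.Icc (0 : ℝ) (dist p q), ∀ t ∈ Set.Icc (0 : ℝ) (dist p q),
      dist (γ s) (γ t) = |s - t|

/-- A subset `A` is geodesically convex if any two of its points are joined by a
geodesic of the ambient space whose image lies in `A`. -/
def GeodConvex {X : Type*} [MetricSpace X] (A : Set X) : Prop :=
  ∀ p ∈ A, ∀ q ∈ A, ∃ γ : ℝ → X, IsGeodesic p q γ ∧
    ∀ t ∈ Set.Icc (0 : ℝ) (dist p q), γ t ∈ A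

/-- The sector `S₁^ε(p)` in the `l∞` plane: points `q` with `d∞(p,q) = ε(q₁ − p₁)`. -/
def sector1 (ε : ℝ) (p : ℝ × ℝ) : Set (ℝ × ℝ) :=
  {q | dist p q = ε * (q.1 - p.1)}

/-- The sector `S₂^ε(p)` in the `l∞` plane: points `q` with `d∞(p,q) = ε(q₂ − p₂)`. -/
def sector2 (ε : ℝ) (p : ℝ × ℝ) : Set (ℝ × ℝ) :=
  {q | dist p q = ε * (q.2 - p.2)}

/-- The `ε₁ε₂`-diagonal ray at `p`: `{(p₁ + ε₁ t, p₂ + ε₂ t) : t ≥ 0}`. -/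
def ray (ε₁ ε₂ : ℝ) (p : ℝ × ℝ) : Set (ℝ × ℝ) :=
  {q | ∃ t : ℝ, 0 ≤ t ∧ q = (p.1 + ε₁ * t, p.2 + ε₂ * t)}

section Geodesic

variable {X : Type*} [MetricSpace X]

theorem IsGeodesic.continuousOn {p q : X} {γ : ℝ → X} (hγ : IsGeodesic p q γ) :
    ContinuousOn γ (Set.Icc 0 (dist p q)) := by
  refine (LipschitzOnWith.of_dist_le_mul fun s hs t ht => ?_).continuousOn (K := 1)
  rw [hγ.2.2 s hs t ht, NNReal.coe_one, one_mul, Real.dist_eq]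

theorem GeodConvex.isPreconnected {A : Set X} (hA : GeodConvex A) : IsPreconnected A := by
  refine isPreconnected_of_forall_pair fun p hp q hq => ?_
  obtain ⟨γ, hγ, hγA⟩ := hA p hp q hq
  refine ⟨γ '' Set.Icc 0 (dist p q), Set.image_subset_iff.2 hγA, ?_, ?_,
    isPreconnected_Icc.image γ hγ.continuousOn⟩
  · exact ⟨0, Set.left_mem_Icc.2 dist_nonneg, hγ.1⟩
  · exact ⟨dist p q, Set.right_mem_Icc.2 dist_nonneg, hγ.2.1⟩

end Geodesic

theorem ray_union_ray_eq_antidiagonal (c : ℝ × ℝ) :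
    ray 1 (-1) c ∪ ray (-1) 1 c = {b | b.1 + b.2 = c.1 + c.2} := by
  ext b
  simp only [ray, Set.mem_union, Set.mem_ofPred_eq, Prod.ext_iff]
  constructor
  · rintro (⟨t, -, h₁, h₂⟩ | ⟨t, -, h₁, h₂⟩) <;> linarith
  · intro h
    rcases le_total c.1 b.1 with hle | hle
    · exact Or.inl ⟨b.1 - c.1, by linarith, by ring, by linarith⟩
    · exact Or.inr ⟨c.1 - b.1, by linarith, by ring, by linarith⟩

theorem ray_union_ray_inter_eq_empty_iff (A : Set (ℝ × ℝ)) (p : ℝ × ℝ) (t : ℝ) :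
    (ray 1 (-1) (p.1 + t, p.2 + t) ∪ ray (-1) 1 (p.1 + t, p.2 + t)) ∩ A = ∅ ↔
      p.1 + p.2 + 2 * t ∉ (fun b : ℝ × ℝ => b.1 + b.2) '' A := by
  simp only [ray_union_ray_eq_antidiagonal, Set.mem_image, Set.eq_empty_iff_forall_notMem,
    Set.mem_inter_iff, Set.mem_ofPred_eq, not_exists, not_and]
  exact ⟨fun h b hb hsum => h b (by linarith) hb, fun h b hsum hb => h b hb (by linarith)⟩

theorem mem_sector1_neg_or_mem_sector2_neg_of_add_le {p b : ℝ × ℝ}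
    (h : b.1 + b.2 ≤ p.1 + p.2) : b ∈ sector1 (-1) p ∨ b ∈ sector2 (-1) p := by
  simp only [sector1, sector2, Set.mem_ofPred_eq, Prod.dist_eq, Real.dist_eq]
  rcases le_total (b.1 - p.1) (b.2 - p.2) with hb | hb
  · left
    rw [abs_of_nonneg (by linarith : 0 ≤ p.1 - b.1),
      max_eq_left (abs_le.2 ⟨by linarith, by linarith⟩)]
    ring
  · right
    rw [abs_of_nonneg (by linarith : 0 ≤ p.2 - b.2),
      max_eq_right (abs_le.2 ⟨by linarith, by linarith⟩)]
    ring

theorem add_lt_add_of_sector_neg_inter_eq_empty {A : Set (ℝ × ℝ)} {p : ℝ × ℝ}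
    (h1m : sector1 (-1) p ∩ A = ∅) (h2m : sector2 (-1) p ∩ A = ∅) {b : ℝ × ℝ}
    (hb : b ∈ A) : p.1 + p.2 < b.1 + b.2 := by
  by_contra! hle
  rcases mem_sector1_neg_or_mem_sector2_neg_of_add_le hle with h | h
  · exact h1m.subset ⟨h, hb⟩
  · exact h2m.subset ⟨h, hb⟩

/-- When the set of such `t` is unbounded (e.g. `S` is bounded above), `sSup` is `0` by
convention and the claim reduces to `c ≤ x`. -/
theorem add_two_mul_sSup_le {S : Set ℝ} (hS : S.OrdConnected) {c : ℝ} (hc : ∀ y ∈ S, c < y)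
    {x : ℝ} (hx : x ∈ S) : c + 2 * sSup {t | 0 ≤ t ∧ c + 2 * t ∉ S} ≤ x := by
  set T := {t | 0 ≤ t ∧ c + 2 * t ∉ S}
  by_cases hbdd : BddAbove T
  · by_contra! hlt
    have h0T : (0 : ℝ) ∈ T := ⟨le_rfl, fun h => by linarith [hc _ h]⟩
    obtain ⟨t, ⟨ht0, htS⟩, hxt⟩ :=
      exists_lt_of_lt_csSup ⟨0, h0T⟩ (by linarith : (x - c) / 2 < sSup T)
    obtain ⟨t', ht'T, htt'⟩ : ∃ t' ∉ T, t < t' := by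
      obtain ⟨B, hB⟩ := hbdd
      exact ⟨max B t + 1, fun h => by linarith [hB h, le_max_left B t],
        by linarith [le_max_right B t]⟩
    have ht'S : c + 2 * t' ∈ S := by
      by_contra h
      exact ht'T ⟨by linarith, h⟩
    exact htS (hS.out hx ht'S ⟨by linarith, by linarith⟩)
  · rw [Real.sSup_of_not_bddAbove hbdd]
    linarith [hc x hx]

theorem dist_add_diag_le {a p : ℝ × ℝ} {t : ℝ} (ht : 0 ≤ t)
    (h : p.1 + p.2 + 2 * t ≤ a.1 + a.2) : dist a (p.1 + t, p.2 + t) ≤ dist a p := by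
  simp only [Prod.dist_eq, Real.dist_eq]
  have h₁ := abs_le.1 (le_max_left |a.1 - p.1| |a.2 - p.2|)
  have h₂ := abs_le.1 (le_max_right |a.1 - p.1| |a.2 - p.2|)
  exact max_le (abs_le.2 ⟨by linarith, by linarith⟩) (abs_le.2 ⟨by linarith, by linarith⟩)

theorem two_sectors_case_general (A : Set (ℝ × ℝ)) (hgc : GeodConvex A)
    (p : ℝ × ℝ)
    (h1m : sector1 (-1) p ∩ A = ∅) (h2m : sector2 (-1) p ∩ A = ∅)
    (t₀ : ℝ)
    (ht₀ : t₀ = sSup {t : ℝ | 0 ≤ t ∧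
      (ray 1 (-1) (p.1 + t, p.2 + t) ∪ ray (-1) 1 (p.1 + t, p.2 + t)) ∩ A = ∅}) :
    ∀ a ∈ A, dist a (p.1 + t₀, p.2 + t₀) ≤ dist a p := by
  set S := (fun b : ℝ × ℝ => b.1 + b.2) '' A
  have hS : S.OrdConnected :=
    (hgc.isPreconnected.image _ (continuous_fst.add continuous_snd).continuousOn).ordConnected
  have hpS : ∀ y ∈ S, p.1 + p.2 < y := by
    rintro _ ⟨b, hb, rfl⟩
    exact add_lt_add_of_sector_neg_inter_eq_empty h1m h2m hb
  simp only [ray_union_ray_inter_eq_empty_iff] at ht₀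
  intro a ha
  refine dist_add_diag_le (ht₀ ▸ Real.sSup_nonneg fun t ht => ht.1) ?_
  exact ht₀ ▸ add_two_mul_sSup_le hS hpS (Set.mem_image_of_mem _ ha)

/-- Two-sectors case: if `A ⊆ ℝ²_∞` is nonempty, closed and geodesically convex,
`p ∉ A`, exactly the sectors `S₁^+(p)` and `S₂^+(p)` meet `A`, and
`t₀` is the supremum of the `t ≥ 0` for which the antidiagonal line through
`(p₁+t, p₂+t)` misses `A`, then `q = (p₁+t₀, p₂+t₀)` satisfies
`d∞(a,q) ≤ d∞(a,p)` for all `a ∈ A`. -/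
theorem two_sectors_case (A : Set (ℝ × ℝ)) (hne : A.Nonempty)
    (hcl : IsClosed A) (hgc : GeodConvex A)
    (p : ℝ × ℝ) (hp : p ∉ A)
    (h1p : (sector1 1 p ∩ A).Nonempty) (h2p : (sector2 1 p ∩ A).Nonempty)
    (h1m : sector1 (-1) p ∩ A = ∅) (h2m : sector2 (-1) p ∩ A = ∅)
    (t₀ : ℝ)
    (ht₀ : t₀ = sSup {t : ℝ | 0 ≤ t ∧
      (ray 1 (-1) (p.1 + t, p.2 + t) ∪ ray (-1) 1 (p.1 + t, p.2 + t)) ∩ A = ∅}) :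
    ∀ a ∈ A, dist a (p.1 + t₀, p.2 + t₀) ≤ dist a p :=
  two_sectors_case_general A hgc p h1m h2m t₀ ht₀
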